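/- Let e ∈ ℝⁿ be nonzero and set E = eeᵀ/‖e‖². Let C = {T ∈ ℝ^{n×n} : Te = e and Tᵀe = e}. Then C is nonempty and, for every T ∈ ℝ^{n×n}, the Frobenius projection of T onto C equals E + (I − E)T(I − E). -/

import Mathlib

/-!
Write `P = E + (1 - E) T (1 - E)`. Since `E e = e`, both `P` and `Pᵀ` fix `e`, so `P ∈ C`.
For `S ∈ C` the difference `M = P - S` annihilates `e` on both sides, hence `E M = 0 = M E`.
As `T - P = E T (1 - E) + (T - 1) E`, this makes `T - P` Frobenius-orthogonal to `M`, and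
Pythagoras gives `‖T - S‖² = ‖T - P‖² + ‖M‖² ≥ ‖T - P‖²`.
-/

open Matrix

section

variable {m n : Type*} [Fintype m] [Fintype n]

lemma sum_sq_eq_trace_transpose_mul (X : Matrix m n ℝ) :
    ∑ i, ∑ j, X i j ^ 2 = (Xᵀ * X).trace := by
  rw [Finset.sum_comm]
  simp [trace, mul_apply, sq]

lemma sum_sq_le_sum_sq_add_of_trace_eq_zero {A B : Matrix m n ℝ} (h : (Aᵀ * B).trace = 0) :
    ∑ i, ∑ j, A i j ^ 2 ≤ ∑ i, ∑ j, (A + B) i j ^ 2 := by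
  have hBA : (Bᵀ * A).trace = 0 := by
    rw [← trace_transpose, transpose_mul, transpose_transpose, h]
  have hB : 0 ≤ (Bᵀ * B).trace := by
    rw [← sum_sq_eq_trace_transpose_mul]
    positivity
  rw [sum_sq_eq_trace_transpose_mul, sum_sq_eq_trace_transpose_mul, transpose_add,
    Matrix.add_mul, Matrix.mul_add, Matrix.mul_add, trace_add, trace_add, trace_add, h, hBA]
  linarith

end

section

variable {n : Type*} [Fintype n] [DecidableEq n]

lemma transpose_add_sub_mul_mul_sub {E : Matrix n n ℝ} (hE : Eᵀ = E) (T : Matrix n n ℝ) :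
    (E + (1 - E) * T * (1 - E))ᵀ = E + (1 - E) * Tᵀ * (1 - E) := by
  simp only [transpose_add, transpose_mul, transpose_sub, transpose_one, hE, Matrix.mul_assoc]

lemma add_sub_mul_mul_sub_mulVec {E : Matrix n n ℝ} {e : n → ℝ} (hEe : E *ᵥ e = e)
    (T : Matrix n n ℝ) : (E + (1 - E) * T * (1 - E)) *ᵥ e = e := by
  have hE₁ : (1 - E) *ᵥ e = 0 := by rw [sub_mulVec, one_mulVec, hEe, sub_self]
  rw [add_mulVec, hEe, ← mulVec_mulVec, hE₁, mulVec_zero, add_zero]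

lemma trace_transpose_sub_add_sub_mul_mul_sub_mul {E M : Matrix n n ℝ} (hE : Eᵀ = E)
    (hEM : E * M = 0) (hME : M * E = 0) (T : Matrix n n ℝ) :
    ((T - (E + (1 - E) * T * (1 - E)))ᵀ * M).trace = 0 := by
  have hsplit : T - (E + (1 - E) * T * (1 - E)) = E * T * (1 - E) + (T - 1) * E := by
    noncomm_ring
  rw [hsplit, transpose_add, add_mul, trace_add]
  simp only [transpose_mul, hE, Matrix.mul_assoc, hEM, Matrix.mul_zero, trace_zero, zero_add]
  rw [trace_mul_comm, Matrix.mul_assoc, hME, Matrix.mul_zero, trace_zero]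

end

section

variable {n : Type*} [Fintype n]

/-- The matrix `E = eeᵀ/‖e‖²`; it is `0` when `e = 0`, since `0⁻¹ = 0`. -/
noncomputable def lineProj (e : n → ℝ) : Matrix n n ℝ := (e ⬝ᵥ e)⁻¹ • vecMulVec e e

lemma lineProj_transpose (e : n → ℝ) : (lineProj e)ᵀ = lineProj e := by
  simp [lineProj]

lemma lineProj_mulVec_self {e : n → ℝ} (he : e ≠ 0) : lineProj e *ᵥ e = e := by
  have hee : e ⬝ᵥ e ≠ 0 := fun h => he (dotProduct_self_eq_zero.mp h)
  rw [lineProj, smul_mulVec, vecMulVec_mulVec, op_smul_eq_smul, smul_smul, inv_mul_cancel₀ hee,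
    one_smul]

lemma lineProj_mul_eq_zero {e : n → ℝ} {M : Matrix n n ℝ} (hM : e ᵥ* M = 0) :
    lineProj e * M = 0 := by
  rw [lineProj, smul_mul, vecMulVec_mul, hM]
  simp

lemma mul_lineProj_eq_zero {e : n → ℝ} {M : Matrix n n ℝ} (hM : M *ᵥ e = 0) :
    M * lineProj e = 0 := by
  rw [lineProj, Matrix.mul_smul, mul_vecMulVec, hM]
  simp

end

/-- For nonzero `e ∈ ℝⁿ` and `E = eeᵀ/‖e‖²`, the set `C = {T : Te = e = Tᵀe}` is nonempty
and the Frobenius projection of `T` onto `C` is `E + (I − E)T(I − E)`. -/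
theorem stmt_12 {n : ℕ} (e : Fin n → ℝ) (he : e ≠ 0)
    (E : Matrix (Fin n) (Fin n) ℝ) (hE : E = (e ⬝ᵥ e)⁻¹ • vecMulVec e e)
    (C : Set (Matrix (Fin n) (Fin n) ℝ))
    (hC : C = {T | T.mulVec e = e ∧ T.transpose.mulVec e = e}) :
    C.Nonempty ∧
    ∀ T : Matrix (Fin n) (Fin n) ℝ,
      (E + (1 - E) * T * (1 - E)) ∈ C ∧
      ∀ S ∈ C,
        (∑ i, ∑ j, (T - (E + (1 - E) * T * (1 - E))) i j ^ 2)
          ≤ ∑ i, ∑ j, (T - S) i j ^ 2 := by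
  change E = lineProj e at hE
  subst hE hC
  have hEt := lineProj_transpose e
  have hEe := lineProj_mulVec_self he
  refine ⟨⟨1, by simp⟩, fun T => ⟨?_, fun S ⟨hSe, hSte⟩ => ?_⟩⟩
  · exact ⟨add_sub_mul_mul_sub_mulVec hEe T, by
      rw [transpose_add_sub_mul_mul_sub hEt]; exact add_sub_mul_mul_sub_mulVec hEe Tᵀ⟩
  set P := lineProj e + (1 - lineProj e) * T * (1 - lineProj e)
  have hMe : (P - S) *ᵥ e = 0 := by rw [sub_mulVec, add_sub_mul_mul_sub_mulVec hEe, hSe, sub_self]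
  have hMte : e ᵥ* (P - S) = 0 := by
    rw [← mulVec_transpose, transpose_sub, sub_mulVec, transpose_add_sub_mul_mul_sub hEt,
      add_sub_mul_mul_sub_mulVec hEe, hSte, sub_self]
  have horth : ((T - P)ᵀ * (P - S)).trace = 0 :=
    trace_transpose_sub_add_sub_mul_mul_sub_mul hEt (lineProj_mul_eq_zero hMte)
      (mul_lineProj_eq_zero hMe) T
  simpa only [sub_add_sub_cancel] using sum_sq_le_sum_sq_add_of_trace_eq_zero horth
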